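/- arXiv:2007.13234 — 6 statements merged into one kernel-verified Lean document; each statement's English description precedes it below -/
import Mathlib

section
/- For every page request sequence z partitioned into b blocks with respect to cache size k (each block containing at most k distinct pages, each block maximal), and for every cache size h ≤ k, any algorithm serving z with a cache of size h incurs at least (b−1)(k−h+1) page faults. -/
/-- A (demand-)paging schedule for cache size `h` serving the request
sequence `z`: `cache i` is the cache contents just before serving the `i`-th
request.  The cache starts empty, never holds more than `h` pages, the
requested page is in the cache after serving it, and pages enter the cache
only when requested. -/
structure PagingSchedule (h : ℕ) (z : List ℕ) where
  cache : ℕ → Finset ℕ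
  init : cache 0 = ∅
  card_le : ∀ i, (cache i).card ≤ h
  serves : ∀ i, i < z.length → z.getD i 0 ∈ cache (i + 1)
  moves : ∀ i, i < z.length → cache (i + 1) ⊆ cache i ∪ {z.getD i 0}

/-- The number of page faults incurred by a paging schedule on `z`. -/
def schedFaults {h : ℕ} {z : List ℕ} (S : PagingSchedule h z) : ℕ :=
  ((List.range z.length).filter
    fun i => decide (z.getD i 0 ∉ S.cache i)).length

/-- The minimum number of page faults needed to serve `z` with a cache of
size `h` (the performance of the optimal offline algorithm). -/
noncomputable def optFaults (h : ℕ) (z : List ℕ) : ℕ :=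
  sInf {n | ∃ S : PagingSchedule h z, schedFaults S = n}

/-- `B` is the (greedy) block partition of `z` with respect to cache size `k`. -/
structure IsBlockPartition (k : ℕ) (z : List ℕ) (B : List (List ℕ)) : Prop where
  join_eq : B.flatten = z
  nonempty : ∀ blk ∈ B, blk ≠ []
  distinct_le : ∀ blk ∈ B, blk.dedup.length ≤ k
  maximal : ∀ i, i + 1 < B.length →
    ((B.getD i []) ++ [(B.getD (i + 1) []).headI]).dedup.length = k + 1


/-! Between the first request of block `i` and the first request of block `i + 1` (both
included) `k + 1` distinct pages are requested. Right after the first of these requests is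
served, the cache holds at most `h` pages, among them the page just requested; so at least
`k + 1 - h` of the pages are missing from it, and the next request to each of them is a fault.
These windows, with their first request removed, are disjoint for different `i`. -/

open Finset

def requestedPages (z : List ℕ) (I : Finset ℕ) : Finset ℕ := I.image (z.getD · 0)

lemma toFinset_take_drop_subset_requestedPages (z : List ℕ) (m l : ℕ) :
    ((z.drop m).take l).toFinset ⊆ requestedPages z (Ico m (m + l)) := by
  intro p hp
  obtain ⟨j, hj, rfl⟩ := List.getElem_of_mem (List.mem_toFinset.1 hp)
  simp only [List.length_take, List.length_drop, lt_min_iff] at hj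
  refine mem_image.2 ⟨m + j, mem_Ico.2 ⟨by omega, by omega⟩, ?_⟩
  rw [List.getD_eq_getElem _ _ (by omega)]
  simp

namespace PagingSchedule

variable {h : ℕ} {z : List ℕ} (S : PagingSchedule h z)

def faultsIn (I : Finset ℕ) : Finset ℕ := I.filter fun j => z.getD j 0 ∉ S.cache j

lemma card_faultsIn_Ico_add {a b c : ℕ} (hab : a ≤ b) (hbc : b ≤ c) :
    (S.faultsIn (Ico a c)).card = (S.faultsIn (Ico a b)).card + (S.faultsIn (Ico b c)).card := by
  rw [← Ico_union_Ico_eq_Ico hab hbc, faultsIn, filter_union,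
    card_union_of_disjoint (disjoint_filter_filter (Ico_disjoint_Ico_consecutive a b c))]
  rfl

lemma sum_card_faultsIn_Ico {t : ℕ → ℕ} (ht : Monotone t) (n : ℕ) :
    ∑ i ∈ range n, (S.faultsIn (Ico (t i) (t (i + 1)))).card =
      (S.faultsIn (Ico (t 0) (t n))).card := by
  induction n with
  | zero => simp [faultsIn]
  | succ n ih =>
    rw [sum_range_succ, ih, card_faultsIn_Ico_add S (ht n.zero_le) (ht n.le_succ)]

lemma cache_subset_union_requestedPages {m n : ℕ} (hmn : m ≤ n) (hn : n ≤ z.length) :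
    S.cache n ⊆ S.cache m ∪ requestedPages z (Ico m n) := by
  induction n, hmn using Nat.le_induction with
  | base => simp
  | succ n hmn ih =>
    have hmono : requestedPages z (Ico m n) ⊆ requestedPages z (Ico m (n + 1)) :=
      image_subset_image (Ico_subset_Ico_right n.le_succ)
    have hreq : z.getD n 0 ∈ requestedPages z (Ico m (n + 1)) :=
      mem_image_of_mem _ (mem_Ico.2 ⟨hmn, n.lt_succ_self⟩)
    refine (S.moves n (by omega)).trans (union_subset ((ih (by omega)).trans ?_) ?_)
    · exact union_subset_union subset_rfl hmono
    · exact singleton_subset_iff.2 (mem_union_right _ hreq)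

/-- The first request to a page missing from the cache is a fault. -/
lemma requestedPages_sdiff_cache_subset {m n : ℕ} (hmn : m ≤ n) (hn : n ≤ z.length) :
    requestedPages z (Ico m n) \ S.cache m ⊆ requestedPages z (S.faultsIn (Ico m n)) := by
  induction n, hmn using Nat.le_induction with
  | base => simp [requestedPages]
  | succ n hmn ih =>
    intro p hp
    obtain ⟨hp_req, hp_cache⟩ := mem_sdiff.1 hp
    by_cases hp_old : p ∈ requestedPages z (Ico m n)
    · exact image_subset_image (filter_subset_filter _ (Ico_subset_Ico_right n.le_succ))
        (ih (by omega) (mem_sdiff.2 ⟨hp_old, hp_cache⟩))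
    · obtain ⟨j, hj, rfl⟩ := mem_image.1 hp_req
      obtain ⟨hmj, hjn⟩ := mem_Ico.1 hj
      obtain rfl : j = n := by
        by_contra hne
        exact hp_old (mem_image_of_mem _ (mem_Ico.2 ⟨hmj, by omega⟩))
      have hfault : z.getD j 0 ∉ S.cache j := fun hc => by
        rcases mem_union.1 (S.cache_subset_union_requestedPages hmn (by omega) hc) with h' | h'
        exacts [hp_cache h', hp_old h']
      exact mem_image_of_mem _ (mem_filter.2 ⟨hj, hfault⟩)

theorem card_requestedPages_sub_le_card_faultsIn {m n : ℕ} (hmn : m < n)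
    (hn : n ≤ z.length) :
    (requestedPages z (Ico m n)).card - h ≤ (S.faultsIn (Ico (m + 1) n)).card := by
  have hserved : z.getD m 0 ∈ S.cache (m + 1) := S.serves m (by omega)
  have hsplit : requestedPages z (Ico m n) \ S.cache (m + 1) =
      requestedPages z (Ico (m + 1) n) \ S.cache (m + 1) := by
    rw [requestedPages, ← insert_Ico_add_one_left_eq_Ico hmn, image_insert,
      insert_sdiff_of_mem _ hserved, requestedPages]
  calc (requestedPages z (Ico m n)).card - h
      ≤ (requestedPages z (Ico m n)).card - (S.cache (m + 1)).card :=
        Nat.sub_le_sub_left (S.card_le _) _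
    _ ≤ (requestedPages z (Ico m n) \ S.cache (m + 1)).card := le_card_sdiff _ _
    _ ≤ (requestedPages z (S.faultsIn (Ico (m + 1) n))).card := by
        rw [hsplit]
        exact card_le_card (S.requestedPages_sdiff_cache_subset hmn hn)
    _ ≤ (S.faultsIn (Ico (m + 1) n)).card := card_image_le

end PagingSchedule

def blockStart (B : List (List ℕ)) (i : ℕ) : ℕ := ((B.map List.length).take i).sum

lemma blockStart_mono (B : List (List ℕ)) : Monotone (blockStart B) :=
  List.monotone_sum_take _

lemma blockStart_succ {B : List (List ℕ)} {i : ℕ} (hi : i < B.length) :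
    blockStart B (i + 1) = blockStart B i + (B.getD i []).length := by
  rw [blockStart, List.sum_take_succ _ _ (by simpa using hi), List.getD_eq_getElem _ _ hi]
  simp [blockStart]

namespace IsBlockPartition

variable {k : ℕ} {z : List ℕ} {B : List (List ℕ)}

lemma drop_blockStart (hB : IsBlockPartition k z B) (i : ℕ) :
    z.drop (blockStart B i) = (B.drop i).flatten :=
  hB.join_eq ▸ List.drop_sum_flatten B i

lemma blockStart_lt_length (hB : IsBlockPartition k z B) {i : ℕ} (hi : i < B.length) :
    blockStart B i < z.length := by
  have hne : B[i] ≠ [] := hB.nonempty _ (List.getElem_mem hi)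
  have hdrop := hB.drop_blockStart i
  rw [List.drop_eq_getElem_cons hi, List.flatten_cons] at hdrop
  have hlen := congrArg List.length hdrop
  simp only [List.length_drop, List.length_append] at hlen
  have hpos := List.length_pos_iff.2 hne
  omega

lemma take_drop_blockStart (hB : IsBlockPartition k z B) {i : ℕ} (hi : i + 1 < B.length) :
    (z.drop (blockStart B i)).take ((B.getD i []).length + 1) =
      B.getD i [] ++ [(B.getD (i + 1) []).headI] := by
  obtain ⟨p, rest, hnext⟩ := List.exists_cons_of_ne_nil (hB.nonempty _ (List.getElem_mem hi))
  rw [hB.drop_blockStart, List.drop_eq_getElem_cons (by omega), List.drop_eq_getElem_cons hi,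
    List.getD_eq_getElem _ _ (by omega), List.getD_eq_getElem _ _ hi, hnext]
  simp [List.take_length_add_append]

lemma le_card_requestedPages_block (hB : IsBlockPartition k z B) {i : ℕ}
    (hi : i + 1 < B.length) :
    k + 1 ≤ (requestedPages z (Ico (blockStart B i) (blockStart B (i + 1) + 1))).card := by
  rw [← hB.maximal i hi, ← List.card_toFinset, ← hB.take_drop_blockStart hi,
    blockStart_succ (by omega)]
  exact card_le_card (toFinset_take_drop_subset_requestedPages _ _ _)

lemma le_card_faultsIn_block (hB : IsBlockPartition k z B) {h : ℕ} (hhk : h ≤ k)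
    (S : PagingSchedule h z) {i : ℕ} (hi : i + 1 < B.length) :
    k - h + 1 ≤ (S.faultsIn (Ico (blockStart B i + 1) (blockStart B (i + 1) + 1))).card := by
  have hstart : blockStart B i < blockStart B (i + 1) + 1 :=
    Nat.lt_succ_of_le (blockStart_mono B i.le_succ)
  have hfaults := S.card_requestedPages_sub_le_card_faultsIn hstart (hB.blockStart_lt_length hi)
  have hpages := hB.le_card_requestedPages_block hi
  omega

end IsBlockPartition

theorem faults_lower_bound_general (k h : ℕ) (hhk : h ≤ k)
    (z : List ℕ) (B : List (List ℕ)) (hB : IsBlockPartition k z B)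
    (S : PagingSchedule h z) :
    (B.length - 1) * (k - h + 1) ≤ schedFaults S := by
  obtain hB0 | hBpos := Nat.eq_zero_or_pos B.length
  · simp [hB0]
  set t : ℕ → ℕ := fun i => blockStart B i + 1
  have ht : Monotone t := fun i j hij => Nat.succ_le_succ (blockStart_mono B hij)
  have hlast : t (B.length - 1) ≤ z.length := hB.blockStart_lt_length (by omega)
  calc (B.length - 1) * (k - h + 1) = ∑ _i ∈ range (B.length - 1), (k - h + 1) := by simp
    _ ≤ ∑ i ∈ range (B.length - 1), (S.faultsIn (Ico (t i) (t (i + 1)))).card :=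
        sum_le_sum fun i hi => hB.le_card_faultsIn_block hhk S (by have := mem_range.1 hi; omega)
    _ = (S.faultsIn (Ico (t 0) (t (B.length - 1)))).card := S.sum_card_faultsIn_Ico ht _
    _ ≤ (S.faultsIn (range z.length)).card :=
        card_le_card <| filter_subset_filter _ <| by
          rw [range_eq_Ico]; exact Ico_subset_Ico (Nat.zero_le _) hlast
    _ = schedFaults S := rfl

/-- Any algorithm serving `z` with a cache of size `h ≤ k` incurs at least
`(b - 1) * (k - h + 1)` page faults, where `b` is the number of blocks in the
block partition of `z` with respect to `k`. -/
theorem faults_lower_bound (k h : ℕ) (hh : 1 ≤ h) (hhk : h ≤ k)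
    (z : List ℕ) (B : List (List ℕ)) (hB : IsBlockPartition k z B)
    (S : PagingSchedule h z) :
    (B.length - 1) * (k - h + 1) ≤ schedFaults S :=
  faults_lower_bound_general k h hhk z B hB S
end

section
/- In the paging model, the Furthest-in-the-Future algorithm, which on a page fault evicts the cached page whose next request occurs latest in the future (or never), minimizes the total number of page faults over all algorithms with the same cache size. -/
/-- The position (relative to the suffix after time `i`) of the next request
of page `q` strictly after time `i`; equals the length of that suffix if `q`
is never requested again. -/
def nextReq (z : List ℕ) (i : ℕ) (q : ℕ) : ℕ :=
  (z.drop (i + 1)).findIdx (· == q)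

/-- The schedule `S` follows the Furthest-in-the-Future rule: the cache is
unchanged when the requested page is present; on a fault the requested page
is brought in, and if the cache is full the evicted page is one whose next
request occurs latest in the future (or never). -/
def IsFIF (k : ℕ) (z : List ℕ) (S : PagingSchedule k z) : Prop :=
  ∀ i, i < z.length →
    (z.getD i 0 ∈ S.cache i → S.cache (i + 1) = S.cache i) ∧
    (z.getD i 0 ∉ S.cache i → (S.cache i).card < k →
      S.cache (i + 1) = insert (z.getD i 0) (S.cache i)) ∧
    (z.getD i 0 ∉ S.cache i → (S.cache i).card = k →
      ∃ q ∈ S.cache i,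
        S.cache (i + 1) = insert (z.getD i 0) (S.cache i \ {q}) ∧
        ∀ q' ∈ S.cache i, nextReq z i q' ≤ nextReq z i q)

/-!
Belady's argument, by dynamic programming. Let `optCost k w C` be the least number of faults
with which the requests `w` can be served from the initial cache `C`. It is antitone in `C`, and
dropping one page costs at most one extra fault. If `d` is requested no later than `e`, a cache
holding `d` but not `e` is at least as good as one holding `e` but not `d`: it imitates an
optimal schedule of the other until `d` is requested, when the other pays a fault it does not,
which pays for the one page it is short afterwards. So on a fault with a full cache, evicting the
page requested furthest in the future is at least as good as any other step, and along a FIF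
schedule `faults so far + optCost (remaining requests) (current cache)` never increases. It
starts at `optCost k z ∅`, which bounds the faults of every schedule from below.
-/

section OptCost

variable {α : Type*} [DecidableEq α]

def pageFault (p : α) (C : Finset α) : ℕ := if p ∈ C then 0 else 1

structure IsCacheStep (k : ℕ) (p : α) (C D : Finset α) : Prop where
  subset : D ⊆ insert p C
  mem : p ∈ D
  card_le : D.card ≤ k

-- For `k = 0` there is no step and the `sInf` is the junk value `0`.
noncomputable def optCost (k : ℕ) : List α → Finset α → ℕ
  | [], _ => 0
  | p :: w, C => pageFault p C + sInf (optCost k w '' {D | IsCacheStep k p C D})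

variable {k : ℕ}

theorem pageFault_le_of_subset {p : α} {C C' : Finset α} (h : C ⊆ C') :
    pageFault p C' ≤ pageFault p C := by
  unfold pageFault
  split_ifs <;> simp_all [h _]

theorem IsCacheStep.of_subset {p : α} {C C' D : Finset α} (hD : IsCacheStep k p C D)
    (h : C ⊆ C') : IsCacheStep k p C' D :=
  ⟨hD.subset.trans (Finset.insert_subset_insert p h), hD.mem, hD.card_le⟩

theorem optCost_cons_le {p : α} {w : List α} {C D : Finset α} (hD : IsCacheStep k p C D) :
    optCost k (p :: w) C ≤ pageFault p C + optCost k w D :=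
  Nat.add_le_add_left (Nat.sInf_le (Set.mem_image_of_mem _ hD)) _

theorem exists_optCost_cons_eq (hk : 1 ≤ k) (p : α) (w : List α) (C : Finset α) :
    ∃ D, IsCacheStep k p C D ∧ optCost k (p :: w) C = pageFault p C + optCost k w D := by
  have hne : (optCost k w '' {D | IsCacheStep k p C D}).Nonempty :=
    ⟨_, {p}, (⟨by simp, by simp, by simpa⟩ : IsCacheStep k p C {p}), rfl⟩
  obtain ⟨D, hD, hEq⟩ := Nat.sInf_mem hne
  exact ⟨D, hD, by rw [optCost, hEq]⟩

theorem optCost_le_of_subset (hk : 1 ≤ k) (w : List α) {C C' : Finset α} (h : C ⊆ C') :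
    optCost k w C' ≤ optCost k w C := by
  cases w with
  | nil => rfl
  | cons p w =>
    obtain ⟨D, hD, hEq⟩ := exists_optCost_cons_eq hk p w C
    rw [hEq]
    exact (optCost_cons_le (hD.of_subset h)).trans
      (Nat.add_le_add_right (pageFault_le_of_subset h) _)

theorem optCost_erase_le (hk : 1 ≤ k) (w : List α) (C : Finset α) (e : α) :
    optCost k w (C.erase e) ≤ optCost k w C + 1 := by
  induction w generalizing C with
  | nil => simp [optCost]
  | cons p w ih =>
    obtain ⟨D, hD, hEq⟩ := exists_optCost_cons_eq hk p w C
    rw [hEq]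
    by_cases hpe : p = e
    · subst hpe
      have hD' : IsCacheStep k p (C.erase p) D := ⟨by grind [hD.subset], hD.mem, hD.card_le⟩
      have hfault : pageFault p (C.erase p) = 1 := by simp [pageFault]
      have hstep := optCost_cons_le (w := w) hD'
      omega
    · have hD' : IsCacheStep k p (C.erase e) (D.erase e) :=
        ⟨by grind [hD.subset], Finset.mem_erase.2 ⟨hpe, hD.mem⟩,
          (Finset.card_erase_le).trans hD.card_le⟩
      have hfault : pageFault p (C.erase e) = pageFault p C := by simp [pageFault, hpe]
      have hstep := optCost_cons_le (w := w) hD'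
      have hslack := ih D
      omega

theorem optCost_erase_le_erase (hk : 1 ≤ k) (w : List α) {C : Finset α} {d e : α}
    (hd : d ∈ C) (hde : w.idxOf d ≤ w.idxOf e) :
    optCost k w (C.erase e) ≤ optCost k w (C.erase d) := by
  induction w generalizing C with
  | nil => rfl
  | cons p w ih =>
    by_cases hpe : p = e
    · have hdp : d = e := by
        by_contra hne
        rw [List.idxOf_cons_eq _ hpe, List.idxOf_cons_ne _ (fun h => hne (h.symm.trans hpe))] at hde
        omega
      rw [hdp]
    obtain ⟨D, hD, hEq⟩ := exists_optCost_cons_eq hk p w (C.erase d)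
    rw [hEq]
    by_cases hpd : p = d
    · subst hpd
      have hD' : IsCacheStep k p (C.erase e) (D.erase e) :=
        ⟨by grind [hD.subset], Finset.mem_erase.2 ⟨hpe, hD.mem⟩,
          (Finset.card_erase_le).trans hD.card_le⟩
      have hhit : pageFault p (C.erase e) = 0 := by simp [pageFault, hpe, hd]
      have hmiss : pageFault p (C.erase p) = 1 := by simp [pageFault]
      have hstep := optCost_cons_le (w := w) hD'
      have hslack := optCost_erase_le hk w D e
      omega
    have hidx : w.idxOf d ≤ w.idxOf e := by
      rw [List.idxOf_cons_ne _ hpd, List.idxOf_cons_ne _ hpe] at hde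
      omega
    obtain ⟨D', hD', hD'D⟩ :
        ∃ D', IsCacheStep k p (C.erase e) D' ∧ optCost k w D' ≤ optCost k w D := by
      by_cases heD : e ∈ D
      · have hdD : d ∉ D := fun h => by grind [hD.subset]
        refine ⟨(insert d D).erase e, ⟨by grind [hD.subset], by grind [hD.mem], ?_⟩, ?_⟩
        · rw [Finset.card_erase_of_mem (Finset.mem_insert_of_mem heD),
            Finset.card_insert_of_notMem hdD]
          simpa using hD.card_le
        · simpa [Finset.erase_insert hdD] using ih (Finset.mem_insert_self d D) hidx
      · exact ⟨D, ⟨by grind [hD.subset], hD.mem, hD.card_le⟩, le_rfl⟩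
    have hfault : pageFault p (C.erase e) = pageFault p (C.erase d) := by
      simp [pageFault, hpd, hpe]
    have hstep := optCost_cons_le (w := w) hD'
    omega

theorem optCost_insert_erase_le (hk : 1 ≤ k) (w : List α) {p q : α} {C D : Finset α}
    (hp : p ∉ C) (hC : C.card = k) (hq : q ∈ C) (hfar : ∀ q' ∈ C, w.idxOf q' ≤ w.idxOf q)
    (hD : IsCacheStep k p C D) :
    optCost k w (insert p (C.erase q)) ≤ optCost k w D := by
  obtain ⟨e, he, heD⟩ : ∃ e ∈ insert p C, e ∉ D := Finset.not_subset.1 fun hsub => by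
    have := Finset.card_le_card hsub
    rw [Finset.card_insert_of_notMem hp] at this
    have := hD.card_le
    omega
  have heC : e ∈ C := (Finset.mem_insert.1 he).resolve_left fun h => heD (h ▸ hD.mem)
  have hpq : p ≠ q := fun h => hp (h ▸ hq)
  calc optCost k w (insert p (C.erase q)) = optCost k w ((insert p C).erase q) := by
        rw [Finset.erase_insert_of_ne hpq]
    _ ≤ optCost k w ((insert p C).erase e) :=
        optCost_erase_le_erase hk w (Finset.mem_insert_of_mem heC) (hfar e heC)
    _ ≤ optCost k w D := optCost_le_of_subset hk w (Finset.subset_erase.2 ⟨hD.subset, heD⟩)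

end OptCost

theorem List.drop_eq_getD_cons {α : Type*} {l : List α} {i : ℕ} (d : α) (hi : i < l.length) :
    l.drop i = l.getD i d :: l.drop (i + 1) := by
  rw [List.drop_eq_getElem_cons hi, List.getD_eq_getElem l d hi]

namespace PagingSchedule

variable {k : ℕ} {z : List ℕ}

def faultsFrom (S : PagingSchedule k z) (i : ℕ) : ℕ :=
  ∑ j ∈ Finset.Ico i z.length, pageFault (z.getD j 0) (S.cache j)

theorem schedFaults_eq_faultsFrom_zero (S : PagingSchedule k z) :
    schedFaults S = S.faultsFrom 0 := by
  have hcard : schedFaults S =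
      ((Finset.range z.length).filter fun j => z.getD j 0 ∉ S.cache j).card := rfl
  rw [hcard, Finset.card_filter, faultsFrom, ← Finset.range_eq_Ico]
  simp only [pageFault, ite_not]

theorem faultsFrom_of_lt (S : PagingSchedule k z) {i : ℕ} (hi : i < z.length) :
    S.faultsFrom i = pageFault (z.getD i 0) (S.cache i) + S.faultsFrom (i + 1) :=
  Finset.sum_eq_sum_Ico_succ_bot hi _

theorem isCacheStep (S : PagingSchedule k z) {i : ℕ} (hi : i < z.length) :
    IsCacheStep k (z.getD i 0) (S.cache i) (S.cache (i + 1)) :=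
  ⟨(S.moves i hi).trans (by rw [Finset.union_comm, ← Finset.insert_eq]), S.serves i hi,
    S.card_le (i + 1)⟩

theorem optCost_drop_le_faultsFrom (S : PagingSchedule k z) {i : ℕ} (hi : i ≤ z.length) :
    optCost k (z.drop i) (S.cache i) ≤ S.faultsFrom i := by
  induction hi using Nat.decreasingInduction with
  | self => simp [optCost]
  | of_succ i hi ih =>
    rw [List.drop_eq_getD_cons 0 hi, S.faultsFrom_of_lt hi]
    exact (optCost_cons_le (S.isCacheStep hi)).trans (Nat.add_le_add_left ih _)

theorem optCost_le_schedFaults (S : PagingSchedule k z) : optCost k z ∅ ≤ schedFaults S := by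
  simpa [S.init, schedFaults_eq_faultsFrom_zero] using S.optCost_drop_le_faultsFrom (Nat.zero_le _)

end PagingSchedule

namespace IsFIF

variable {k : ℕ} {z : List ℕ} {F : PagingSchedule k z}

theorem pageFault_add_optCost_le (hk : 1 ≤ k) (hF : IsFIF k z F) {i : ℕ} (hi : i < z.length) :
    pageFault (z.getD i 0) (F.cache i) + optCost k (z.drop (i + 1)) (F.cache (i + 1)) ≤
      optCost k (z.drop i) (F.cache i) := by
  rw [List.drop_eq_getD_cons 0 hi]
  obtain ⟨D, hD, hEq⟩ := exists_optCost_cons_eq hk (z.getD i 0) (z.drop (i + 1)) (F.cache i)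
  rw [hEq, add_le_add_iff_left]
  obtain ⟨hhit, hroom, hfull⟩ := hF i hi
  by_cases hp : z.getD i 0 ∈ F.cache i
  · rw [hhit hp]
    exact optCost_le_of_subset hk _ (Finset.insert_eq_of_mem hp ▸ hD.subset)
  rcases (F.card_le i).lt_or_eq with hlt | heq
  · rw [hroom hp hlt]
    exact optCost_le_of_subset hk _ hD.subset
  · obtain ⟨q, hq, hF', hfar⟩ := hfull hp heq
    rw [hF', Finset.sdiff_singleton_eq_erase]
    exact optCost_insert_erase_le hk _ hp heq hq hfar hD

theorem faultsFrom_le_optCost_drop (hk : 1 ≤ k) (hF : IsFIF k z F) {i : ℕ}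
    (hi : i ≤ z.length) :
    F.faultsFrom i ≤ optCost k (z.drop i) (F.cache i) := by
  induction hi using Nat.decreasingInduction with
  | self => simp [PagingSchedule.faultsFrom]
  | of_succ i hi ih =>
    rw [F.faultsFrom_of_lt hi]
    exact (Nat.add_le_add_left ih _).trans (hF.pageFault_add_optCost_le hk hi)

theorem schedFaults_le_optCost (hk : 1 ≤ k) (hF : IsFIF k z F) :
    schedFaults F ≤ optCost k z ∅ := by
  simpa [F.init, PagingSchedule.schedFaults_eq_faultsFrom_zero] using
    hF.faultsFrom_le_optCost_drop hk (Nat.zero_le _)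

end IsFIF

/-- The Furthest-in-the-Future algorithm minimizes the total number of page
faults over all algorithms with the same cache size. -/
theorem fif_optimal (k : ℕ) (hk : 1 ≤ k) (z : List ℕ)
    (F : PagingSchedule k z) (hF : IsFIF k z F)
    (S : PagingSchedule k z) :
    schedFaults F ≤ schedFaults S :=
  (hF.schedFaults_le_optCost hk).trans S.optCost_le_schedFaults
end

section
/- For every deterministic online paging algorithm A with cache size k and every h ≤ k, and for every constant α < k/(k−h+1), there exist arbitrarily long page request sequences z over a universe of k+1 pages such that the number of page faults of A with cache size k on z exceeds α times the number of page faults of the optimal offline algorithm with cache size h on z. -/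
/-- A deterministic online (demand-)paging algorithm with cache size `k`:
the cache contents are a function of the request history seen so far. -/
structure OnlineAlg (k : ℕ) where
  cache : List ℕ → Finset ℕ
  init : cache [] = ∅
  card_le : ∀ pre, (cache pre).card ≤ k
  serves : ∀ pre x, x ∈ cache (pre ++ [x])
  moves : ∀ pre x, cache (pre ++ [x]) ⊆ cache pre ∪ {x}

/-- The number of page faults incurred by the online algorithm `A` on `z`. -/
def onlineFaults {k : ℕ} (A : OnlineAlg k) (z : List ℕ) : ℕ :=
  ((List.range z.length).filter
    fun i => decide (z.getD i 0 ∉ A.cache (z.take i))).length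


/-!
The adversary always requests a page of `{0, …, k}` missing from the cache of `A`, so `A` faults
on each of the `N` requests, and no request repeats the previous one.

For the offline side, a request at time `s` whose page recurs before the end spans an interval up
to its next occurrence, and that occurrence is a hit if the page is kept from time `s + 2` on.
At any time at most `k` intervals are live (their pages are distinct and differ from the page just
requested), so the first-fit colouring of the intervals uses `k` colours, each class consisting of
intervals that are never live together. Keeping the `h - 1` heaviest classes in the `h - 1` spare
slots of the cache turns a `(h - 1) / k` fraction of the at least `N - (k + 1)` recurrences into
hits, whence `k * OPT_h + (h - 1) * N ≤ k * N + (h - 1) * (k + 1)`, and `N / OPT_h` tends to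
`k / (k - h + 1)`.
-/

open Finset Filter

section Recurrence

variable {α : Type*} {f : ℕ → α} {s t : ℕ}

noncomputable def nextOcc (f : ℕ → α) (s : ℕ) : ℕ := sInf {t | s < t ∧ f t = f s}

lemma nextOcc_spec (h : ∃ t, s < t ∧ f t = f s) : s < nextOcc f s ∧ f (nextOcc f s) = f s :=
  Nat.sInf_mem h

lemma nextOcc_le (hst : s < t) (h : f t = f s) : nextOcc f s ≤ t :=
  Nat.sInf_le ⟨hst, h⟩

lemma nextOcc_injOn : Set.InjOn (nextOcc f) {s | ∃ t, s < t ∧ f t = f s} := by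
  intro s₁ h₁ s₂ h₂ heq
  by_contra hne
  wlog hlt : s₁ < s₂ generalizing s₁ s₂
  · exact this h₂ h₁ heq.symm (Ne.symm hne) (by omega)
  have hf : f s₂ = f s₁ := calc
    f s₂ = f (nextOcc f s₂) := (nextOcc_spec h₂).2.symm
    _ = f (nextOcc f s₁) := by rw [heq]
    _ = f s₁ := (nextOcc_spec h₁).2
  have := nextOcc_le hlt hf
  have := (nextOcc_spec h₂).1
  omega

/-- The page requested at time `s` has to be in the cache at time `i` (just before request `i`)
for its next occurrence to be a hit; at time `s + 1` it is the page just requested, which is in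
the cache anyway. -/
def IsLive (f : ℕ → α) (s i : ℕ) : Prop := s + 2 ≤ i ∧ i ≤ nextOcc f s

noncomputable instance (f : ℕ → α) (s i : ℕ) : Decidable (IsLive f s i) :=
  inferInstanceAs (Decidable (_ ∧ _))

/-- The pages live at time `i` are distinct and differ from the page requested at time `i - 1`. -/
lemma card_lt_of_isLive {U : Finset α} (hU : ∀ i, f i ∈ U) {I : Finset ℕ} {i : ℕ}
    (hI : ∀ s ∈ I, IsLive f s i) : #I < #U := by
  classical
  have hprev : f (i - 1) ∈ U := hU _
  have hmaps : Set.MapsTo f I (U.erase (f (i - 1))) := by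
    intro s hs
    refine mem_erase.mpr ⟨fun heq => ?_, hU s⟩
    obtain ⟨hsi, hin⟩ := hI s hs
    have := nextOcc_le (by omega : s < i - 1) heq.symm
    omega
  have hinj : Set.InjOn f I := by
    intro s₁ h₁ s₂ h₂ heq
    obtain ⟨hs₁, hn₁⟩ := hI s₁ h₁
    obtain ⟨hs₂, hn₂⟩ := hI s₂ h₂
    by_contra hne
    rcases Nat.lt_or_gt_of_ne hne with hlt | hlt
    · have := nextOcc_le hlt heq.symm; omega
    · have := nextOcc_le hlt heq; omega
  have := card_le_card_of_injOn f hmaps hinj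
  rw [card_erase_of_mem hprev] at this
  have := card_pos.mpr ⟨_, hprev⟩
  omega

lemma card_range_le_card_filter_recurs_add [DecidableEq α] {U : Finset α} (hU : ∀ i, f i ∈ U)
    (N : ℕ) :
    N ≤ #((range N).filter fun s => ∃ t < N, s < t ∧ f t = f s) + #U := by
  have hlast : #((range N).filter fun s => ¬ ∃ t < N, s < t ∧ f t = f s) ≤ #U := by
    refine card_le_card_of_injOn f (fun s _ => hU s) fun s₁ h₁ s₂ h₂ heq => ?_
    obtain ⟨h₁N, h₁⟩ := mem_filter.mp h₁
    obtain ⟨h₂N, h₂⟩ := mem_filter.mp h₂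
    by_contra hne
    rcases Nat.lt_or_gt_of_ne hne with hlt | hlt
    · exact h₁ ⟨s₂, mem_range.mp h₂N, hlt, heq.symm⟩
    · exact h₂ ⟨s₁, mem_range.mp h₁N, hlt, heq⟩
  have := card_filter_add_card_filter_not (s := range N) (fun s => ∃ t < N, s < t ∧ f t = f s)
  rw [card_range] at this
  omega

end Recurrence

section GreedyColoring

variable {α : Type*} {f : ℕ → α} {s s' : ℕ}

noncomputable def greedyColor (f : ℕ → α) (s : ℕ) : ℕ :=
  sInf {c | ∀ s' < s, s + 2 ≤ nextOcc f s' → greedyColor f s' ≠ c}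
termination_by s
decreasing_by assumption

lemma greedyColor_eq (f : ℕ → α) (s : ℕ) :
    greedyColor f s = sInf {c | ∀ s' < s, s + 2 ≤ nextOcc f s' → greedyColor f s' ≠ c} := by
  rw [greedyColor]

lemma greedyColor_ne (hs' : s' < s) (hlive : s + 2 ≤ nextOcc f s') :
    greedyColor f s' ≠ greedyColor f s := by
  obtain ⟨c, hc⟩ := Infinite.exists_notMem_finset ((range s).image (greedyColor f))
  have hne : {c | ∀ s' < s, s + 2 ≤ nextOcc f s' → greedyColor f s' ≠ c}.Nonempty :=
    ⟨c, fun s' hs' _ heq => hc (mem_image.mpr ⟨s', mem_range.mpr hs', heq⟩)⟩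
  rw [greedyColor_eq f s]
  exact Nat.sInf_mem hne s' hs' hlive

lemma greedyColor_lt {U : Finset α} {k : ℕ} (hU : ∀ i, f i ∈ U) (hk : #U ≤ k + 1)
    (hs : s + 2 ≤ nextOcc f s) : greedyColor f s < k := by
  classical
  set O := (range s).filter fun s' => IsLive f s' (s + 2)
  have hO : #(insert s O) < #U := by
    refine card_lt_of_isLive (i := s + 2) hU fun s'' hs'' => ?_
    rcases mem_insert.mp hs'' with rfl | hs''
    · exact ⟨le_rfl, hs⟩
    · exact (mem_filter.mp hs'').2
  rw [card_insert_of_notMem (by simp [O])] at hO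
  obtain ⟨c, hck, hcO⟩ := exists_mem_notMem_of_card_lt_card
    (s := O.image (greedyColor f)) (t := range k)
    (by rw [card_range]; linarith [card_image_le (s := O) (f := greedyColor f)])
  have hc : ∀ s' < s, s + 2 ≤ nextOcc f s' → greedyColor f s' ≠ c := fun s' hs' hlive heq =>
    hcO (mem_image.mpr ⟨s', mem_filter.mpr ⟨mem_range.mpr hs', by omega, hlive⟩, heq⟩)
  calc greedyColor f s ≤ c := by rw [greedyColor_eq]; exact Nat.sInf_le hc
    _ < k := mem_range.mp hck

lemma card_filter_isLive_le {H C : Finset ℕ}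
    (hHC : ∀ s ∈ H, greedyColor f s ∈ C) (i : ℕ) : #(H.filter (IsLive f · i)) ≤ #C := by
  refine card_le_card_of_injOn (greedyColor f) (fun s hs => hHC s (mem_filter.mp hs).1) ?_
  intro s₁ h₁ s₂ h₂ heq
  obtain ⟨-, hs₁, hn₁⟩ := mem_filter.mp h₁
  obtain ⟨-, hs₂, hn₂⟩ := mem_filter.mp h₂
  by_contra hne
  rcases Nat.lt_or_gt_of_ne hne with hlt | hlt
  · exact greedyColor_ne hlt (by omega) heq
  · exact greedyColor_ne hlt (by omega) heq.symm

end GreedyColoring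

lemma Finset.exists_subset_card_eq_mul_sum_le {ι : Type*} [DecidableEq ι] (ν : ι → ℕ) :
    ∀ {m : ℕ} {s : Finset ι}, m ≤ #s →
      ∃ S ⊆ s, #S = m ∧ m * ∑ x ∈ s, ν x ≤ #s * ∑ x ∈ S, ν x
  | 0, s, _ => ⟨∅, empty_subset s, card_empty, by simp⟩
  | m + 1, s, hm => by
    -- add a heaviest element to the best choice of `m` elements among the others
    obtain ⟨c, hc, hmax⟩ := s.exists_max_image ν (card_pos.mp (by omega))
    obtain ⟨S, hSs, hSm, hS⟩ := exists_subset_card_eq_mul_sum_le ν (m := m) (s := s.erase c)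
      (by rw [card_erase_of_mem hc]; omega)
    have hcS : c ∉ S := fun h => notMem_erase c s (hSs h)
    refine ⟨insert c S, insert_subset hc (hSs.trans (erase_subset c s)),
      by rw [card_insert_of_notMem hcS, hSm], ?_⟩
    have hrest : ∑ x ∈ s.erase c \ S, ν x ≤ #(s.erase c \ S) * ν c := by
      simpa using sum_le_card_nsmul _ _ _ fun x hx => hmax x (mem_of_mem_erase (mem_sdiff.mp hx).1)
    rw [← sum_sdiff hSs, ← card_sdiff_add_card_eq_card hSs, hSm] at hS
    rw [← add_sum_erase s ν hc, sum_insert hcS, ← sum_sdiff hSs, ← card_erase_add_one hc,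
      ← card_sdiff_add_card_eq_card hSs, hSm]
    nlinarith

lemma optFaults_le_schedFaults {h : ℕ} {z : List ℕ} (S : PagingSchedule h z) :
    optFaults h z ≤ schedFaults S :=
  Nat.sInf_le ⟨S, rfl⟩

section KeepSchedule

variable {h : ℕ} {z : List ℕ} {H : Finset ℕ}

noncomputable def keepCache (z : List ℕ) (H : Finset ℕ) (i : ℕ) : Finset ℕ :=
  if i = 0 then ∅
  else insert (z.getD (i - 1) 0) ((H.filter (IsLive (z.getD · 0) · i)).image (z.getD · 0))

lemma mem_keepCache_of_isLive {s i : ℕ} (hs : s ∈ H) (hlive : IsLive (z.getD · 0) s i) :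
    z.getD s 0 ∈ keepCache z H i := by
  rw [keepCache, if_neg (by have := hlive.1; omega)]
  exact mem_insert_of_mem (mem_image_of_mem _ (mem_filter.mpr ⟨hs, hlive⟩))

lemma getD_mem_keepCache_succ (i : ℕ) : z.getD i 0 ∈ keepCache z H (i + 1) := by
  simp [keepCache]

lemma keepCache_succ_subset (i : ℕ) :
    keepCache z H (i + 1) ⊆ keepCache z H i ∪ {z.getD i 0} := by
  intro x hx
  rw [keepCache, if_neg i.succ_ne_zero, Nat.add_sub_cancel] at hx
  rcases mem_insert.mp hx with rfl | hx
  · exact mem_union_right _ (mem_singleton_self _)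
  obtain ⟨s, hs, rfl⟩ := mem_image.mp hx
  obtain ⟨hsH, hsi, hin⟩ := mem_filter.mp hs
  apply mem_union_left
  rcases Nat.lt_or_ge s (i - 1) with hlt | hge
  · exact mem_keepCache_of_isLive hsH ⟨by omega, by omega⟩
  · obtain rfl : s = i - 1 := by omega
    rw [keepCache, if_neg (by omega)]
    exact mem_insert_self _ _

lemma card_keepCache_le (hlive : ∀ i, #(H.filter (IsLive (z.getD · 0) · i)) ≤ h - 1)
    (i : ℕ) :
    #(keepCache z H i) ≤ 1 + (h - 1) := by
  unfold keepCache
  split_ifs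
  · simp
  · have := (card_image_le (f := (z.getD · 0))).trans (hlive i)
    exact (card_insert_le _ _).trans (by omega)

noncomputable def keepSchedule (hh : 1 ≤ h)
    (hlive : ∀ i, #(H.filter (IsLive (z.getD · 0) · i)) ≤ h - 1) :
    PagingSchedule h z where
  cache := keepCache z H
  init := if_pos rfl
  card_le i := (card_keepCache_le hlive i).trans (by omega)
  serves i _ := getD_mem_keepCache_succ i
  moves i _ := keepCache_succ_subset i

lemma getD_nextOcc_mem_keepCache {s : ℕ} (hs : s ∈ H)
    (hrec : ∃ t, s < t ∧ z.getD t 0 = z.getD s 0) :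
    z.getD (nextOcc (z.getD · 0) s) 0 ∈ keepCache z H (nextOcc (z.getD · 0) s) := by
  obtain ⟨hlt, heq⟩ := nextOcc_spec hrec
  rw [heq]
  rcases Nat.lt_or_ge (s + 1) (nextOcc (z.getD · 0) s) with hlt' | hge
  · exact mem_keepCache_of_isLive hs ⟨hlt', le_rfl⟩
  · obtain hnext : nextOcc (z.getD · 0) s = s + 1 := by omega
    rw [hnext]
    exact getD_mem_keepCache_succ s

lemma schedFaults_keepSchedule_le (hh : 1 ≤ h)
    (hlive : ∀ i, #(H.filter (IsLive (z.getD · 0) · i)) ≤ h - 1)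
    (hrec : ∀ s ∈ H, ∃ t < z.length, s < t ∧ z.getD t 0 = z.getD s 0) :
    schedFaults (keepSchedule hh hlive) ≤ z.length - #H := by
  classical
  have hrec' : ∀ s ∈ H, ∃ t, s < t ∧ z.getD t 0 = z.getD s 0 := fun s hs => by
    obtain ⟨t, -, ht⟩ := hrec s hs
    exact ⟨t, ht⟩
  have himage : H.image (nextOcc (z.getD · 0)) ⊆ range z.length := fun t ht => by
    obtain ⟨s, hs, rfl⟩ := mem_image.mp ht
    obtain ⟨t, htN, hst, heq⟩ := hrec s hs
    exact mem_range.mpr ((nextOcc_le hst heq).trans_lt htN)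
  have hcard : #(H.image (nextOcc (z.getD · 0))) = #H :=
    card_image_of_injOn fun s₁ h₁ s₂ h₂ => nextOcc_injOn (hrec' s₁ h₁) (hrec' s₂ h₂)
  have hfaults : (range z.length).filter (fun i => z.getD i 0 ∉ keepCache z H i) ⊆
      range z.length \ H.image (nextOcc (z.getD · 0)) := fun i hi => by
    refine mem_sdiff.mpr ⟨(mem_filter.mp hi).1, fun him => (mem_filter.mp hi).2 ?_⟩
    obtain ⟨s, hs, rfl⟩ := mem_image.mp him
    exact getD_nextOcc_mem_keepCache hs (hrec' s hs)
  calc schedFaults (keepSchedule hh hlive)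
      = #((range z.length).filter (fun i => z.getD i 0 ∉ keepCache z H i)) := rfl
    _ ≤ #(range z.length \ H.image (nextOcc (z.getD · 0))) := card_le_card hfaults
    _ = z.length - #H := by rw [card_sdiff_of_subset himage, card_range, hcard]

end KeepSchedule

lemma List.getD_mem_range {z : List ℕ} {k : ℕ} (hz : ∀ x ∈ z, x ≤ k) (i : ℕ) :
    z.getD i 0 ∈ Finset.range (k + 1) := by
  rw [Finset.mem_range, Nat.lt_succ_iff, List.getD_eq_getElem?_getD]
  cases hi : z[i]? with
  | none => simp
  | some x => exact hz x (List.mem_of_getElem? hi)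

theorem optFaults_bound {k h : ℕ} {z : List ℕ} (hh : 1 ≤ h) (hhk : h ≤ k + 1)
    (hz : ∀ x ∈ z, x ≤ k)
    (hrep : ∀ i, i + 1 < z.length → z.getD (i + 1) 0 ≠ z.getD i 0) :
    k * optFaults h z + (h - 1) * z.length ≤ k * z.length + (h - 1) * (k + 1) := by
  set N := z.length
  set T := (range N).filter fun s => ∃ t < N, s < t ∧ z.getD t 0 = z.getD s 0
  have hT : N ≤ #T + (k + 1) := by
    have := card_range_le_card_filter_recurs_add (f := (z.getD · 0)) (List.getD_mem_range hz) N
    rwa [card_range] at this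
  have hcolor : ∀ s ∈ T, greedyColor (z.getD · 0) s ∈ range k := fun s hs => by
    obtain ⟨-, t, htN, hst, heq⟩ := mem_filter.mp hs
    have hnext := nextOcc_spec (f := (z.getD · 0)) ⟨t, hst, heq⟩
    have hle := nextOcc_le (f := (z.getD · 0)) hst heq
    have hne : nextOcc (z.getD · 0) s ≠ s + 1 := fun hsucc =>
      hrep s (by omega) (hsucc ▸ hnext.2)
    exact mem_range.mpr (greedyColor_lt (List.getD_mem_range hz) (by simp) (by omega))
  obtain ⟨C, hCk, hCcard, hC⟩ := exists_subset_card_eq_mul_sum_le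
    (fun c => #(T.filter (greedyColor (z.getD · 0) · = c))) (m := h - 1) (s := range k)
    (by simp; omega)
  rw [card_range, sum_card_fiberwise_eq_card_filter, sum_card_fiberwise_eq_card_filter,
    filter_true_of_mem hcolor] at hC
  set H := T.filter (greedyColor (z.getD · 0) · ∈ C)
  have hlive : ∀ i, #(H.filter (IsLive (z.getD · 0) · i)) ≤ h - 1 := fun i =>
    hCcard ▸ card_filter_isLive_le (fun s hs => (mem_filter.mp hs).2) i
  have hopt : optFaults h z ≤ N - #H :=
    (optFaults_le_schedFaults (keepSchedule hh hlive)).trans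
      (schedFaults_keepSchedule_le hh hlive fun s hs => (mem_filter.mp (mem_filter.mp hs).1).2)
  have hHN : #H ≤ N := (card_le_card ((filter_subset _ _).trans (filter_subset _ _))).trans
    (card_range N).le
  have hoptH : k * optFaults h z + k * #H ≤ k * N := by
    rw [← Nat.mul_add]; exact Nat.mul_le_mul_left k (by omega)
  nlinarith

namespace OnlineAlg

variable {k : ℕ} (A : OnlineAlg k)

lemma exists_le_notMem_cache (l : List ℕ) : ∃ p ≤ k, p ∉ A.cache l := by
  obtain ⟨p, hp, hpA⟩ := exists_mem_notMem_of_card_lt_card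
    (s := A.cache l) (t := range (k + 1)) (by simpa using Nat.lt_succ_of_le (A.card_le l))
  exact ⟨p, Nat.lt_succ_iff.mp (mem_range.mp hp), hpA⟩

noncomputable def evader (l : List ℕ) : ℕ := (A.exists_le_notMem_cache l).choose

lemma evader_le (l : List ℕ) : A.evader l ≤ k := (A.exists_le_notMem_cache l).choose_spec.1

lemma evader_notMem_cache (l : List ℕ) : A.evader l ∉ A.cache l :=
  (A.exists_le_notMem_cache l).choose_spec.2

noncomputable def adversary : ℕ → List ℕ
  | 0 => []
  | n + 1 => adversary n ++ [A.evader (adversary n)]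

@[simp]
lemma length_adversary (n : ℕ) : (A.adversary n).length = n := by
  induction n with
  | zero => rfl
  | succ n ih => simp [adversary, ih]

lemma adversary_prefix {i n : ℕ} (hin : i ≤ n) : A.adversary i <+: A.adversary n := by
  induction n, hin using Nat.le_induction with
  | base => exact List.prefix_refl _
  | succ n _ ih => exact ih.trans (List.prefix_append _ _)

lemma take_adversary {i n : ℕ} (hin : i ≤ n) : (A.adversary n).take i = A.adversary i := by
  simpa using (List.prefix_iff_eq_take.mp (A.adversary_prefix hin)).symm

lemma getD_adversary {i n : ℕ} (hin : i < n) :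
    (A.adversary n).getD i 0 = A.evader (A.adversary i) := by
  rw [← List.take_append_drop (i + 1) (A.adversary n), List.getD_append _ _ _ _ (by simp; omega),
    A.take_adversary hin, adversary, List.getD_append_right _ _ _ _ (by simp)]
  simp

lemma adversary_le {n x : ℕ} (hx : x ∈ A.adversary n) : x ≤ k := by
  induction n with
  | zero => simp [adversary] at hx
  | succ n ih =>
    rcases List.mem_append.mp hx with hx | hx
    · exact ih hx
    · exact (List.mem_singleton.mp hx) ▸ A.evader_le _

lemma onlineFaults_adversary (n : ℕ) : onlineFaults A (A.adversary n) = n := by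
  unfold onlineFaults
  rw [List.filter_eq_self.mpr, List.length_range, length_adversary]
  intro i hi
  have hin : i < n := by simpa using hi
  rw [decide_eq_true_eq, A.take_adversary hin.le, A.getD_adversary hin]
  exact A.evader_notMem_cache _

lemma getD_adversary_succ_ne {n i : ℕ} (hi : i + 1 < n) :
    (A.adversary n).getD (i + 1) 0 ≠ (A.adversary n).getD i 0 := by
  rw [A.getD_adversary hi, A.getD_adversary (by omega)]
  intro heq
  apply A.evader_notMem_cache (A.adversary (i + 1))
  rw [heq]
  exact A.serves _ _

end OnlineAlg

lemma mul_lt_of_affine_bound {a d e F N α : ℝ} (ha : 0 < a) (hF : 0 ≤ F) (hN : 0 < N)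
    (hbound : a * F + d * N ≤ a * N + d * e) (hα : α * (d * e) < N * (a - α * (a - d))) :
    α * F < N := by
  rcases le_or_gt α 0 with hα0 | hα0
  · nlinarith
  · nlinarith

/-- Lower bound matching the LRU resource augmentation guarantee: for every
deterministic online algorithm `A` with cache size `k`, every `h ≤ k`, and
every constant `α < k / (k - h + 1)`, there are arbitrarily long request
sequences over a universe of `k + 1` pages on which `A` faults more than
`α` times as often as the optimal offline algorithm with cache size `h`. -/
theorem online_lower_bound (k h : ℕ) (hh : 1 ≤ h) (hhk : h ≤ k)
    (α : ℝ) (hα : α < (k : ℝ) / ((k : ℝ) - (h : ℝ) + 1))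
    (A : OnlineAlg k) (m : ℕ) :
    ∃ z : List ℕ, m ≤ z.length ∧ (∀ x ∈ z, x ≤ k) ∧
      α * (optFaults h z : ℝ) < (onlineFaults A z : ℝ) := by
  have hk : (0 : ℝ) < k := by exact_mod_cast (show 0 < k by omega)
  have hhk' : (h : ℝ) ≤ k := by exact_mod_cast hhk
  have hgap : 0 < (k : ℝ) - α * (k - (h - 1)) := by
    have := (lt_div_iff₀ (by linarith)).mp hα
    linarith
  obtain ⟨N, hmN, hN0, hN⟩ : ∃ N : ℕ, m ≤ N ∧ 0 < N ∧
      α * ((h - 1) * (k + 1)) / (k - α * (k - (h - 1))) < N :=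
    ((eventually_ge_atTop m).and ((eventually_gt_atTop 0).and
      (tendsto_natCast_atTop_atTop.eventually_gt_atTop _))).exists
  refine ⟨A.adversary N, by simpa using hmN, fun _ => A.adversary_le, ?_⟩
  have hopt := optFaults_bound (z := A.adversary N) hh (by omega) (fun _ => A.adversary_le)
    fun _ hi => A.getD_adversary_succ_ne (by simpa using hi)
  rw [A.length_adversary] at hopt
  rw [A.onlineFaults_adversary]
  refine mul_lt_of_affine_bound hk (Nat.cast_nonneg _) (by exact_mod_cast hN0) ?_
    ((div_lt_iff₀ hgap).mp hN)
  rw [← Nat.cast_pred hh]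
  exact_mod_cast hopt
end

section
/- Let E be a finite set of parallel edges from s to t, each edge e with a nonnegative, nondecreasing cost function c_e : ℝ≥0 → ℝ≥0. Let r > 0 and δ > 0. Let f be an equilibrium flow of rate r: f_e ≥ 0, Σ_e f_e = r, and there exists L ≥ 0 with c_e(f_e) = L whenever f_e > 0 and c_e(f_e) ≥ L for all e. Let f* be any flow of rate (1+δ)r: f*_e ≥ 0, Σ_e f*_e = (1+δ)r. Then Σ_e c_e(f*_e)·f*_e ≥ δ · Σ_e c_e(f_e)·f_e. -/
/-!
At equilibrium every used edge costs exactly `L`, so the equilibrium cost is `L * r`.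
Edge by edge, any flow `f'` pays at least `L` per unit on the flow it adds on top of `f`,
because costs are monotone and every edge costs at least `L` under `f`; summing, the cost
of `f'` is at least `L * (∑ f' - ∑ f) = L * δ * r`.
-/

open Finset

theorem mul_sub_le_apply_mul {c : ℝ → ℝ} (hc : ∀ z, 0 ≤ z → 0 ≤ c z)
    (hmono : MonotoneOn c (Set.Ici 0)) {L x y : ℝ} (hL : 0 ≤ L) (hx : 0 ≤ x) (hy : 0 ≤ y)
    (hLx : L ≤ c x) : L * (y - x) ≤ c y * y := by
  rcases le_or_gt x y with hxy | hyx
  · calc L * (y - x) ≤ L * y := by nlinarith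
      _ ≤ c y * y := mul_le_mul_of_nonneg_right (hLx.trans (hmono hx hy hxy)) hy
  · calc L * (y - x) ≤ 0 := mul_nonpos_of_nonneg_of_nonpos hL (by linarith)
      _ ≤ c y * y := mul_nonneg (hc y hy) hy

theorem sum_apply_mul_eq_mul_sum {E : Type*} [Fintype E] (c : E → ℝ → ℝ) (f : E → ℝ) {L : ℝ}
    (hf : ∀ e, 0 ≤ f e) (hused : ∀ e, 0 < f e → c e (f e) = L) :
    ∑ e, c e (f e) * f e = L * ∑ e, f e := by
  rw [mul_sum]
  refine sum_congr rfl fun e _ => ?_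
  rcases (hf e).eq_or_lt with h | h
  · simp [← h]
  · rw [hused e h]

theorem mul_sum_sub_sum_le_sum_apply_mul {E : Type*} [Fintype E] (c : E → ℝ → ℝ)
    (hc : ∀ e z, 0 ≤ z → 0 ≤ c e z) (hmono : ∀ e, MonotoneOn (c e) (Set.Ici 0))
    (f f' : E → ℝ) {L : ℝ} (hL : 0 ≤ L) (hf : ∀ e, 0 ≤ f e) (hf' : ∀ e, 0 ≤ f' e)
    (hall : ∀ e, L ≤ c e (f e)) :
    L * (∑ e, f' e - ∑ e, f e) ≤ ∑ e, c e (f' e) * f' e := by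
  rw [← sum_sub_distrib, mul_sum]
  exact sum_le_sum fun e _ =>
    mul_sub_le_apply_mul (hc e) (hmono e) hL (hf e) (hf' e) (hall e)

theorem equilibrium_cost_le_augmented_opt_general
    {E : Type} [Fintype E] (c : E → ℝ → ℝ)
    (hnonneg : ∀ e x, 0 ≤ x → 0 ≤ c e x)
    (hmono : ∀ e x y, 0 ≤ x → x ≤ y → c e x ≤ c e y)
    (r δ : ℝ)
    (f f' : E → ℝ) (L : ℝ) (hL : 0 ≤ L)
    (hf_nonneg : ∀ e, 0 ≤ f e) (hf_rate : ∑ e, f e = r)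
    (heq_used : ∀ e, 0 < f e → c e (f e) = L)
    (heq_all : ∀ e, L ≤ c e (f e))
    (hf'_nonneg : ∀ e, 0 ≤ f' e) (hf'_rate : ∑ e, f' e = (1 + δ) * r) :
    δ * ∑ e, c e (f e) * f e ≤ ∑ e, c e (f' e) * f' e := by
  have hmonoOn : ∀ e, MonotoneOn (c e) (Set.Ici 0) := fun e x hx _ _ hxy => hmono e x _ hx hxy
  calc δ * ∑ e, c e (f e) * f e
      = L * (∑ e, f' e - ∑ e, f e) := by
        rw [sum_apply_mul_eq_mul_sum c f hf_nonneg heq_used, hf_rate, hf'_rate]; ring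
    _ ≤ ∑ e, c e (f' e) * f' e :=
        mul_sum_sub_sum_le_sum_apply_mul c hnonneg hmonoOn f f' hL hf_nonneg hf'_nonneg heq_all

/-- Resource augmentation for selfish routing on parallel edges: an
equilibrium flow `f` of rate `r` has cost at most `1/δ` times the cost of any
flow `f'` of rate `(1+δ)r`. -/
theorem equilibrium_cost_le_augmented_opt
    {E : Type} [Fintype E] (c : E → ℝ → ℝ)
    (hnonneg : ∀ e x, 0 ≤ x → 0 ≤ c e x)
    (hmono : ∀ e x y, 0 ≤ x → x ≤ y → c e x ≤ c e y)
    (r δ : ℝ) (hr : 0 < r) (hδ : 0 < δ)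
    (f f' : E → ℝ) (L : ℝ) (hL : 0 ≤ L)
    (hf_nonneg : ∀ e, 0 ≤ f e) (hf_rate : ∑ e, f e = r)
    (heq_used : ∀ e, 0 < f e → c e (f e) = L)
    (heq_all : ∀ e, L ≤ c e (f e))
    (hf'_nonneg : ∀ e, 0 ≤ f' e) (hf'_rate : ∑ e, f' e = (1 + δ) * r) :
    δ * ∑ e, c e (f e) * f e ≤ ∑ e, c e (f' e) * f' e :=
  equilibrium_cost_le_augmented_opt_general c hnonneg hmono r δ f f' L hL hf_nonneg hf_rate heq_used
    heq_all hf'_nonneg hf'_rate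
end

section
/- Let c : ℝ≥0 → ℝ≥0 be a nonnegative nondecreasing cost function and let q ≥ 0 be a fixed flow value. Define c̄(x) = max{c(x), c(q)}. Then for every x ≥ 0, c̄(x)·x − c(x)·x ≤ c(q)·q. -/
theorem max_sub_le_of_nonneg {α : Type*} [AddCommGroup α] [LinearOrder α] [IsOrderedAddMonoid α]
    {a b : α} (ha : 0 ≤ a) (hb : 0 ≤ b) : max a b - a ≤ b :=
  sub_le_iff_le_add.2 (max_le (le_add_of_nonneg_left hb) (le_add_of_nonneg_right ha))

theorem max_mul_sub_mul_le_of_le {α : Type*} [Ring α] [LinearOrder α] [IsOrderedRing α]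
    {a b x q : α} (ha : 0 ≤ a) (hb : 0 ≤ b) (hx : 0 ≤ x) (hxq : x ≤ q) :
    max a b * x - a * x ≤ b * q :=
  calc max a b * x - a * x = (max a b - a) * x := (sub_mul _ _ _).symm
    _ ≤ b * x := mul_le_mul_of_nonneg_right (max_sub_le_of_nonneg ha hb) hx
    _ ≤ b * q := mul_le_mul_of_nonneg_left hxq hb

/-- The key per-edge inequality for the selfish routing resource augmentation
theorem: replacing the cost function `c` by the fictitious cost function
`x ↦ max (c x) (c q)` increases the cost `c x * x` of any flow value `x ≥ 0`
by at most the equilibrium cost `c q * q`. -/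
theorem fictitious_cost_increase (c : ℝ → ℝ)
    (hnonneg : ∀ x, 0 ≤ x → 0 ≤ c x)
    (hmono : ∀ x y, 0 ≤ x → x ≤ y → c x ≤ c y)
    (q : ℝ) (hq : 0 ≤ q) (x : ℝ) (hx : 0 ≤ x) :
    max (c x) (c q) * x - c x * x ≤ c q * q := by
  rcases le_total q x with hqx | hxq
  · rw [max_eq_left (hmono q x hq hqx), sub_self]
    exact mul_nonneg (hnonneg q hq) hq
  · exact max_mul_sub_mul_le_of_le (hnonneg x hx) (hnonneg q hq) hx hxq
end

section
/- Let B be a finite bipartite graph with left vertices J and right vertices I, each vertex h having a weight w_h > 0, and let α : J × I → ℝ≥0 satisfy: (1) Σ_{i ∈ I} α(j,i) = ε·w_j for every j ∈ J; (2) Σ_{j ∈ J} α(j,i) ≤ w_i for every i ∈ I; (3) α(j,i) > 0 implies w_i ≤ w_j. Then |I| ≥ ε·|J|. -/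
/-! Route the charge `α j i` as a flow: it leaves `j` as the amount `α j i / wJ j` and arrives at
`i` as `α j i / wI i`, which is at least as large since charge only moves from heavier to lighter
vertices. Each `j` emits exactly `ε` units of the normalised flow and each `i` absorbs at most one,
so `ε * |J| ≤ |I|`. -/

open Finset

lemma div_le_div_of_pos_imp_le {a b c : ℝ} (ha : 0 ≤ a) (hb : 0 < b) (h : 0 < a → b ≤ c) :
    a / c ≤ a / b := by
  rcases ha.eq_or_lt with rfl | ha
  · simp
  · exact div_le_div_of_nonneg_left ha.le hb (h ha)

section
variable {ι : Type*} [Fintype ι] {f g : ι → ℝ}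

lemma sum_div_eq_card_mul {c : ℝ} (hg : ∀ i, g i ≠ 0) (hfg : ∀ i, f i = c * g i) :
    ∑ i, f i / g i = Fintype.card ι * c := by
  simp [hfg, mul_div_assoc, div_self (hg _)]

lemma sum_div_le_card (hg : ∀ i, 0 < g i) (hfg : ∀ i, f i ≤ g i) :
    ∑ i, f i / g i ≤ Fintype.card ι := by
  calc ∑ i, f i / g i ≤ ∑ _i : ι, (1 : ℝ) := sum_le_sum fun i _ => (div_le_one (hg i)).2 (hfg i)
    _ = Fintype.card ι := by simp

end

theorem charging_lemma_general {J I : Type} [Fintype J] [Fintype I]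
    (wJ : J → ℝ) (wI : I → ℝ) (hwJ : ∀ j, 0 < wJ j) (hwI : ∀ i, 0 < wI i)
    (ε : ℝ) (α : J → I → ℝ) (hα : ∀ j i, 0 ≤ α j i)
    (hout : ∀ j, ∑ i, α j i = ε * wJ j)
    (hin : ∀ i, ∑ j, α j i ≤ wI i)
    (hcmp : ∀ j i, 0 < α j i → wI i ≤ wJ j) :
    ε * (Fintype.card J : ℝ) ≤ (Fintype.card I : ℝ) := by
  calc ε * (Fintype.card J : ℝ) = ∑ j, (∑ i, α j i) / wJ j := by
        rw [sum_div_eq_card_mul (fun j => (hwJ j).ne') hout, mul_comm]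
    _ = ∑ j, ∑ i, α j i / wJ j := by simp_rw [sum_div]
    _ ≤ ∑ j, ∑ i, α j i / wI i := sum_le_sum fun j _ => sum_le_sum fun i _ =>
        div_le_div_of_pos_imp_le (hα j i) (hwI i) (hcmp j i)
    _ = ∑ i, (∑ j, α j i) / wI i := by rw [sum_comm]; simp_rw [sum_div]
    _ ≤ Fintype.card I := sum_div_le_card hwI hin

/-- The abstract charging (expansive flow) lemma: if every left vertex `j`
sends total charge `ε * wJ j`, every right vertex `i` receives total charge
at most `wI i`, and charges only go from heavier to lighter vertices
(`α j i > 0 → wI i ≤ wJ j`), then `|I| ≥ ε * |J|`. -/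
theorem charging_lemma {J I : Type} [Fintype J] [Fintype I]
    (wJ : J → ℝ) (wI : I → ℝ) (hwJ : ∀ j, 0 < wJ j) (hwI : ∀ i, 0 < wI i)
    (ε : ℝ) (hε : 0 < ε) (α : J → I → ℝ) (hα : ∀ j i, 0 ≤ α j i)
    (hout : ∀ j, ∑ i, α j i = ε * wJ j)
    (hin : ∀ i, ∑ j, α j i ≤ wI i)
    (hcmp : ∀ j i, 0 < α j i → wI i ≤ wJ j) :
    ε * (Fintype.card J : ℝ) ≤ (Fintype.card I : ℝ) :=
  charging_lemma_general wJ wI hwJ hwI ε α hα hout hin hcmp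
end
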